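/- Let α₁,…,α_k be real numbers such that 1, α₁,…,α_k are linearly independent over ℚ. Then the set {(m α₁, …, m α_k) mod ℤ^k : m ∈ ℤ} is dense in the torus 𝕋^k. -/

import Mathlib

/-!
Weyl's equidistribution argument. Put `a = (α₁, …, α_k)` on the torus. For a character `χₙ`,
`χₙ (m • a) = χₙ(a) ^ m` with `χₙ(a) = exp (2πi ∑ nᵢαᵢ)`, which is `≠ 1` for `n ≠ 0` by the
independence of `1, α₁, …, α_k`; so the Cesàro means of `χₙ` along `0, a, 2a, …` tend to `∫ χₙ`.
Birkhoff averages are 1-Lipschitz in the sup norm and the characters span a dense subspace of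
`C(𝕋^k, ℂ)` (Stone–Weierstrass), hence the means of every continuous function tend to its integral.
If the orbit avoided an open set, an Urysohn function supported there would have positive integral
but vanishing means.
-/

open MeasureTheory Filter Topology Set Finset Complex Real Submodule UnitAddTorus

section BirkhoffAverage

variable {𝕜 X E : Type*} [RCLike 𝕜] [TopologicalSpace X] [CompactSpace X]
  [NormedAddCommGroup E] [NormedSpace 𝕜 E]

lemma norm_birkhoffAverage_le_norm (f : X → X) (g : C(X, E)) (n : ℕ) (x : X) :
    ‖birkhoffAverage 𝕜 f g n x‖ ≤ ‖g‖ := by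
  rcases eq_or_ne n 0 with rfl | hn
  · simp
  rw [birkhoffAverage, birkhoffSum, norm_smul, norm_inv, RCLike.norm_natCast]
  calc (n : ℝ)⁻¹ * ‖∑ k ∈ range n, g (f^[k] x)‖ ≤ (n : ℝ)⁻¹ * ∑ _k ∈ range n, ‖g‖ := by
        gcongr
        exact (norm_sum_le _ _).trans (sum_le_sum fun k _ => g.norm_coe_le_norm _)
    _ = ‖g‖ := by simp [hn]

lemma lipschitzWith_birkhoffAverage (f : X → X) (n : ℕ) (x : X) :
    LipschitzWith 1 fun g : C(X, E) => birkhoffAverage 𝕜 f g n x :=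
  LipschitzWith.of_dist_le_mul fun g h => by
    simpa [dist_eq_norm, birkhoffAverage_sub] using
      norm_birkhoffAverage_le_norm (𝕜 := 𝕜) f (g - h) n x

variable [MeasurableSpace X] [OpensMeasurableSpace X]

lemma ContinuousMap.integrable (μ : Measure X) [IsFiniteMeasure μ] (g : C(X, E)) :
    Integrable g μ :=
  g.continuous.integrable_of_hasCompactSupport (.of_compactSpace g)

variable [NormedSpace ℝ E]

lemma lipschitzWith_integral (μ : Measure X) [IsFiniteMeasure μ] :
    LipschitzWith (μ.real univ).toNNReal fun g : C(X, E) => ∫ x, g x ∂μ :=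
  LipschitzWith.of_dist_le' fun g h => by
    rw [dist_eq_norm, dist_eq_norm, ← integral_sub (g.integrable μ) (h.integrable μ), mul_comm]
    exact norm_integral_le_of_norm_le_const (.of_forall fun x => (g - h).norm_coe_le_norm x)

theorem isClosed_setOf_tendsto_birkhoffAverage_integral (μ : Measure X) [IsFiniteMeasure μ]
    (f : X → X) (x : X) :
    IsClosed {g : C(X, E) | Tendsto (birkhoffAverage 𝕜 f g · x) atTop (𝓝 (∫ y, g y ∂μ))} :=
  (LipschitzWith.uniformEquicontinuous _ 1 fun n => lipschitzWith_birkhoffAverage f n x)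
    |>.equicontinuous.isClosed_setOfPred_tendsto (lipschitzWith_integral μ).continuous

variable [SMulCommClass ℝ 𝕜 E] in
theorem tendsto_birkhoffAverage_integral_of_dense_span (μ : Measure X) [IsFiniteMeasure μ]
    (f : X → X) (x : X) {s : Set C(X, E)} (hs : (span 𝕜 s).topologicalClosure = ⊤)
    (h : ∀ g ∈ s, Tendsto (birkhoffAverage 𝕜 f g · x) atTop (𝓝 (∫ y, g y ∂μ)))
    (g : C(X, E)) : Tendsto (birkhoffAverage 𝕜 f g · x) atTop (𝓝 (∫ y, g y ∂μ)) := by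
  let t : Submodule 𝕜 C(X, E) :=
    { carrier := {g | Tendsto (birkhoffAverage 𝕜 f g · x) atTop (𝓝 (∫ y, g y ∂μ))}
      zero_mem' := by simp [birkhoffAverage, birkhoffSum]
      add_mem' := fun {g h} hg hh => by
        simpa [birkhoffAverage_add, integral_add (g.integrable μ) (h.integrable μ)] using
          hg.add hh
      smul_mem' := fun c g hg => by
        simpa [birkhoffAverage, birkhoffSum, Finset.smul_sum, smul_comm c, integral_smul] using
          hg.const_smul c }
  have hst : (span 𝕜 s).topologicalClosure ≤ t :=
    (span 𝕜 s).topologicalClosure_minimal (span_le.2 h)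
      (isClosed_setOf_tendsto_birkhoffAverage_integral μ f x)
  exact hst (hs ▸ mem_top)

end BirkhoffAverage

theorem denseRange_iterate_of_tendsto_birkhoffAverage_integral {𝕜 X : Type*} [RCLike 𝕜]
    [TopologicalSpace X] [CompactSpace X] [T2Space X] [MeasurableSpace X] [OpensMeasurableSpace X]
    (μ : Measure X) [IsFiniteMeasure μ] [μ.IsOpenPosMeasure] {f : X → X} {x : X}
    (h : ∀ g : C(X, 𝕜), Tendsto (birkhoffAverage 𝕜 f g · x) atTop (𝓝 (∫ y, g y ∂μ))) :
    DenseRange fun n : ℕ => f^[n] x := by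
  by_contra hdense
  obtain ⟨y, hy⟩ : ∃ y, y ∉ closure (range fun n : ℕ => f^[n] x) := by
    simpa [DenseRange, Dense] using hdense
  obtain ⟨φ, hφ_orbit, hφ_y, hφ_mem⟩ := exists_continuous_zero_one_of_isClosed isClosed_closure
    isClosed_singleton (disjoint_singleton_right.2 hy)
  have hpos : 0 < ∫ z, φ z ∂μ :=
    φ.continuous.integral_pos_of_hasCompactSupport_nonneg_nonzero (.of_compactSpace φ)
      (fun z => (hφ_mem z).1) (x := y) (by simp [hφ_y rfl])
  let g : C(X, 𝕜) := ⟨fun z => (φ z : 𝕜), by fun_prop⟩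
  have hg_orbit : ∀ n, birkhoffAverage 𝕜 f g n x = 0 := fun n => by
    simp [birkhoffAverage, birkhoffSum, g, hφ_orbit (subset_closure (mem_range_self _))]
  have hg_integral : ∫ z, g z ∂μ = 0 :=
    tendsto_nhds_unique (h g) (by simp only [hg_orbit]; exact tendsto_const_nhds)
  simp only [g, ContinuousMap.coe_mk, integral_ofReal, RCLike.ofReal_eq_zero] at hg_integral
  exact hpos.ne' hg_integral

theorem tendsto_inv_mul_geom_sum_of_norm_le_one {𝕜 : Type*} [RCLike 𝕜] {z : 𝕜} (hz : ‖z‖ ≤ 1)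
    (hz1 : z ≠ 1) : Tendsto (fun N : ℕ => (N : 𝕜)⁻¹ * ∑ m ∈ range N, z ^ m) atTop (𝓝 0) := by
  have hz1' : 0 < ‖z - 1‖ := norm_pos_iff.2 (sub_ne_zero.2 hz1)
  refine squeeze_zero_norm (fun N => ?_) (tendsto_const_div_atTop_nhds_zero_nat (2 / ‖z - 1‖))
  have hnum : ‖z ^ N - 1‖ ≤ 2 := calc
    ‖z ^ N - 1‖ ≤ ‖z‖ ^ N + ‖(1 : 𝕜)‖ := (norm_sub_le _ _).trans_eq (by rw [norm_pow])
    _ ≤ 2 := by rw [norm_one]; linarith [pow_le_one₀ (norm_nonneg z) hz (n := N)]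
  rw [geom_sum_eq hz1, norm_mul, norm_div, norm_inv, RCLike.norm_natCast, inv_mul_eq_div]
  gcongr

instance : IsProbabilityMeasure (volume : Measure UnitAddCircle) :=
  ⟨by simp [AddCircle.measure_univ]⟩

namespace UnitAddTorus

variable {d : Type*} [Fintype d]

lemma mFourier_apply_add (n : d → ℤ) (x y : UnitAddTorus d) :
    mFourier n (x + y) = mFourier n x * mFourier n y := by
  simp only [mFourier, ContinuousMap.coe_mk, Pi.add_apply, fourier_apply, smul_add,
    AddCircle.toCircle_add, Circle.coe_mul, prod_mul_distrib]

lemma mFourier_apply_nsmul (n : d → ℤ) (m : ℕ) (x : UnitAddTorus d) :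
    mFourier n (m • x) = mFourier n x ^ m := by
  induction m with
  | zero => simp [mFourier]
  | succ m ih => rw [succ_nsmul, mFourier_apply_add, ih, pow_succ]

lemma norm_mFourier_apply (n : d → ℤ) (x : UnitAddTorus d) : ‖mFourier n x‖ = 1 := by
  simp [mFourier, fourier_apply, Circle.norm_coe]

lemma integral_mFourier_of_ne_zero {n : d → ℤ} (hn : n ≠ 0) : ∫ x, mFourier n x = 0 := by
  obtain ⟨j, hj⟩ := Function.ne_iff.1 hn
  simp only [mFourier, ContinuousMap.coe_mk]
  rw [integral_fintype_prod_volume_eq_prod (fun i => fourier (n i))]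
  exact prod_eq_zero (mem_univ j)
    (integral_eq_zero_of_add_right_eq_neg (fourier_add_half_inv_index hj one_pos))

lemma tendsto_birkhoffAverage_mFourier {a : UnitAddTorus d} (ha : ∀ n ≠ 0, mFourier n a ≠ 1)
    (n : d → ℤ) :
    Tendsto (birkhoffAverage ℂ (· + a) (mFourier n) · 0) atTop (𝓝 (∫ x, mFourier n x)) := by
  have hN : ∀ N, birkhoffAverage ℂ (· + a) (mFourier n) N 0 =
      (N : ℂ)⁻¹ * ∑ m ∈ range N, mFourier n a ^ m := fun N => by
    simp [birkhoffAverage, birkhoffSum, add_right_iterate_apply_zero, mFourier_apply_nsmul]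
  simp only [hN]
  rcases eq_or_ne n 0 with rfl | hn
  · refine tendsto_const_nhds.congr' ((eventually_ne_atTop 0).mono fun N hN => ?_)
    simp [mFourier_zero, hN]
  · rw [integral_mFourier_of_ne_zero hn]
    exact tendsto_inv_mul_geom_sum_of_norm_le_one (norm_mFourier_apply n a).le (ha n hn)

theorem tendsto_birkhoffAverage_add_integral {a : UnitAddTorus d}
    (ha : ∀ n ≠ 0, mFourier n a ≠ 1) (g : C(UnitAddTorus d, ℂ)) :
    Tendsto (birkhoffAverage ℂ (· + a) g · 0) atTop (𝓝 (∫ x, g x)) :=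
  tendsto_birkhoffAverage_integral_of_dense_span volume _ _ span_mFourier_closure_eq_top
    (by rintro _ ⟨n, rfl⟩; exact tendsto_birkhoffAverage_mFourier ha n) g

theorem denseRange_nsmul_of_mFourier_ne_one {a : UnitAddTorus d}
    (ha : ∀ n ≠ 0, mFourier n a ≠ 1) : DenseRange fun m : ℕ => m • a := by
  simpa only [add_right_iterate_apply_zero] using
    denseRange_iterate_of_tendsto_birkhoffAverage_integral volume
      (tendsto_birkhoffAverage_add_integral ha)

lemma mFourier_apply_coe (n : d → ℤ) (x : d → ℝ) :
    mFourier n (fun i => (x i : UnitAddCircle)) = cexp (2 * π * I * (∑ i, n i * x i : ℝ)) := by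
  simp only [mFourier, ContinuousMap.coe_mk, fourier_coe_apply, ← Complex.exp_sum]
  push_cast
  rw [mul_sum]
  exact congrArg cexp (sum_congr rfl fun i _ => by ring)

lemma mFourier_apply_coe_eq_one_iff (n : d → ℤ) (x : d → ℝ) :
    mFourier n (fun i => (x i : UnitAddCircle)) = 1 ↔ ∃ c : ℤ, ∑ i, n i * x i = c := by
  rw [mFourier_apply_coe, Complex.exp_eq_one_iff]
  have h2πI : 2 * π * I ≠ 0 := by simp [pi_ne_zero, I_ne_zero]
  refine exists_congr fun c => ?_
  rw [mul_comm (2 * π * I), mul_left_inj' h2πI]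
  exact_mod_cast Iff.rfl

end UnitAddTorus

theorem LinearIndependent.eq_zero_of_sum_mul_eq_intCast {k : ℕ} {α : Fin k → ℝ}
    (hindep : LinearIndependent ℚ (Fin.cons (1 : ℝ) α : Fin (k + 1) → ℝ)) {n : Fin k → ℤ} {c : ℤ}
    (h : ∑ i, n i * α i = c) : n = 0 := by
  have hrel := Fintype.linearIndependent_iff.1 hindep (Fin.cons (-c : ℚ) fun i => (n i : ℚ)) (by
    simp only [Fin.sum_univ_succ, Fin.cons_zero, Fin.cons_succ, Rat.smul_def]
    push_cast
    rw [h]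
    ring)
  funext i
  simpa using hrel i.succ

/-- **k-variable Kronecker theorem** (Lemma 3.3): if `1, α₁, …, α_k` are
ℚ-linearly independent real numbers, then `{(mα₁,…,mα_k) mod ℤ^k : m ∈ ℤ}`
is dense in the torus `𝕋^k`. -/
theorem kronecker_dense
    (k : ℕ) (α : Fin k → ℝ)
    (hindep : LinearIndependent ℚ (Fin.cons (1 : ℝ) α : Fin (k + 1) → ℝ)) :
    DenseRange (fun m : ℤ =>
      fun i : Fin k => (((m : ℝ) * α i : ℝ) : AddCircle (1 : ℝ))) := by
  have ha : ∀ n ≠ 0, mFourier n (fun i => (α i : UnitAddCircle)) ≠ 1 := fun n hn h1 => by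
    obtain ⟨c, hc⟩ := (mFourier_apply_coe_eq_one_iff n α).1 h1
    exact hn (hindep.eq_zero_of_sum_mul_eq_intCast hc)
  refine (denseRange_nsmul_of_mFourier_ne_one ha).mono ?_
  rintro _ ⟨m, rfl⟩
  exact ⟨m, funext fun i => by simp⟩
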